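/- The set of unitary operators on M of the form I + A, where A is a finite-rank operator, is dense in the group of all unitary operators on M equipped with the strong operator topology. -/

import Mathlib

/-!
Common setup: unitary representations of a (free) group on complex Hilbert spaces,
the group-algebra extension of a representation, irreducibility, the left regular
representation on `ℓ²(G)` and temperedness, abstract Hilbert-space tensor products
of representations, and the space of representations of a free group with the
topology of strong operator convergence on the generators.
-/

noncomputable section

open scoped InnerProductSpace ENNReal

/-- A unitary representation of the group `G` on the complex Hilbert space `K`. -/
abbrev URep (G K : Type) [Group G] [NormedAddCommGroup K] [InnerProductSpace ℂ K]
    [CompleteSpace K] : Type :=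
  G →* unitary (K →L[ℂ] K)

/-- The canonical extension of a unitary representation to an algebra homomorphism from
the group algebra `ℂ[G]` to the algebra of bounded operators on `K`. -/
noncomputable def algRep {G K : Type} [Group G] [NormedAddCommGroup K]
    [InnerProductSpace ℂ K] [CompleteSpace K] (σ : URep G K) :
    MonoidAlgebra ℂ G →ₐ[ℂ] (K →L[ℂ] K) :=
  MonoidAlgebra.lift ℂ (K →L[ℂ] K) G ((unitary (K →L[ℂ] K)).subtype.comp σ)

/-- Irreducibility of a unitary representation: the only closed invariant subspaces are
`⊥` and `⊤`. -/
def IsIrreducibleRep {G K : Type} [Group G] [NormedAddCommGroup K]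
    [InnerProductSpace ℂ K] [CompleteSpace K] (σ : URep G K) : Prop :=
  ∀ V : Submodule ℂ K, IsClosed (V : Set K) →
    (∀ g : G, ∀ v ∈ V, ((σ g : K →L[ℂ] K) v) ∈ V) → V = ⊥ ∨ V = ⊤

section Regular

variable {α β : Type} (e : α ≃ β)

private lemma memℓp_comp_equiv {f : β → ℂ} (hf : Memℓp f 2) :
    Memℓp (fun a => f (e a)) 2 := by
  have h2 : 0 < (2 : ℝ≥0∞).toReal := by norm_num
  rw [memℓp_gen_iff h2] at hf ⊢
  exact (e.summable_iff (f := fun b => ‖f b‖ ^ (2 : ℝ≥0∞).toReal)).2 hf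

private def lpCongrAuxₗ : lp (fun _ : β => ℂ) 2 →ₗ[ℂ] lp (fun _ : α => ℂ) 2 where
  toFun f := ⟨fun a => f (e a), memℓp_comp_equiv e (lp.memℓp f)⟩
  map_add' f g := by ext a; simp [lp.coeFn_add]; rfl
  map_smul' c f := by ext a; simp [lp.coeFn_smul]

/-- Reindexing of `ℓ²` along an equivalence of the index sets, as a linear isometric
equivalence. -/
def lpCongr : lp (fun _ : α => ℂ) 2 ≃ₗᵢ[ℂ] lp (fun _ : β => ℂ) 2 where
  toLinearEquiv := LinearEquiv.ofLinear (lpCongrAuxₗ e.symm) (lpCongrAuxₗ e)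
    (by ext f b; simp [lpCongrAuxₗ]) (by ext f a; simp [lpCongrAuxₗ])
  norm_map' f := by
    have h2 : 0 < (2 : ℝ≥0∞).toReal := by norm_num
    rw [lp.norm_eq_tsum_rpow h2, lp.norm_eq_tsum_rpow h2]
    congr 1
    exact e.symm.tsum_eq (fun a => ‖f a‖ ^ (2 : ℝ≥0∞).toReal) |>.symm ▸ rfl

@[simp] private lemma lpCongr_apply (f : lp (fun _ : α => ℂ) 2) (b : β) :
    (lpCongr e f : ∀ _ : β, ℂ) b = f (e.symm b) := rfl

private lemma lpCongr_trans {γ : Type} (e e' : γ ≃ γ) :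
    lpCongr (e.trans e') = lpCongr e' * lpCongr e := by
  apply LinearIsometryEquiv.ext
  intro f
  apply lp.ext
  funext c
  rfl

/-- Left translations on `ℓ²(G)`, as a homomorphism into the group of linear isometric
equivalences. -/
def lpTranslations (G : Type) [Group G] :
    G →* (lp (fun _ : G => ℂ) 2 ≃ₗᵢ[ℂ] lp (fun _ : G => ℂ) 2) where
  toFun g := lpCongr (Equiv.mulLeft g)
  map_one' := by
    apply LinearIsometryEquiv.ext
    intro f
    apply lp.ext
    funext x
    simp [Equiv.Perm.one_symm]
  map_mul' g h := by
    have key : Equiv.mulLeft (g * h) = (Equiv.mulLeft h).trans (Equiv.mulLeft g) := by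
      ext x; simp [mul_assoc]
    rw [key, lpCongr_trans]

end Regular

/-- The left regular representation of `G` on `ℓ²(G)`. -/
noncomputable def leftRegular (G : Type) [Group G] : URep G (lp (fun _ : G => ℂ) 2) :=
  (Unitary.linearIsometryEquiv.symm.toMonoidHom).comp (lpTranslations G)

/-- A unitary representation `σ` is *tempered* (weakly contained in the regular
representation) if `‖σ(f)‖ ≤ ‖λ(f)‖` for every element `f` of the group algebra. -/
def IsTempered {G K : Type} [Group G] [NormedAddCommGroup K]
    [InnerProductSpace ℂ K] [CompleteSpace K] (σ : URep G K) : Prop :=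
  ∀ f : MonoidAlgebra ℂ G, ‖algRep σ f‖ ≤ ‖algRep (leftRegular G) f‖

/-- `ρ` realizes the Hilbert-space tensor product `η ⊗ π` on `E`: the bilinear map
`tmul : H → M → E` has dense span, satisfies `⟪a⊗b, c⊗d⟫ = ⟪a,c⟫·⟪b,d⟫`, and
`ρ(g)(a⊗b) = η(g)a ⊗ π(g)b` for all `g`. -/
def IsTensorRep {G H M E : Type} [Group G]
    [NormedAddCommGroup H] [InnerProductSpace ℂ H] [CompleteSpace H]
    [NormedAddCommGroup M] [InnerProductSpace ℂ M] [CompleteSpace M]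
    [NormedAddCommGroup E] [InnerProductSpace ℂ E] [CompleteSpace E]
    (η : URep G H) (π : URep G M)
    (tmul : H →ₗ[ℂ] M →ₗ[ℂ] E) (ρ : URep G E) : Prop :=
  (∀ (a c : H) (b d : M), ⟪tmul a b, tmul c d⟫_ℂ = ⟪a, c⟫_ℂ * ⟪b, d⟫_ℂ)
  ∧ Dense (↑(Submodule.span ℂ {z : E | ∃ a b, z = tmul a b}) : Set E)
  ∧ ∀ (g : G) (a : H) (b : M),
      (ρ g : E →L[ℂ] E) (tmul a b) = tmul ((η g : H →L[ℂ] H) a) ((π g : M →L[ℂ] M) b)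

/-- `η` tensored with any irreducible finite-dimensional unitary representation is
irreducible. -/
def TensorFDIrred {G H : Type} [Group G] [NormedAddCommGroup H] [InnerProductSpace ℂ H]
    [CompleteSpace H] (η : URep G H) : Prop :=
  ∀ (N : Type) [NormedAddCommGroup N] [InnerProductSpace ℂ N] [FiniteDimensional ℂ N],
    ∀ π : URep G N, IsIrreducibleRep π →
      ∀ (E : Type) [NormedAddCommGroup E] [InnerProductSpace ℂ E] [CompleteSpace E],
        ∀ (tmul : H →ₗ[ℂ] N →ₗ[ℂ] E) (ρ : URep G E),
          IsTensorRep η π tmul ρ → IsIrreducibleRep ρ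

/-- The space of unitary representations of the free group on `S` on the Hilbert
space `M`, identified with `S`-tuples of unitary operators via evaluation at the
generators. -/
abbrev RepSpace (S M : Type) [NormedAddCommGroup M] [InnerProductSpace ℂ M]
    [CompleteSpace M] : Type :=
  URep (FreeGroup S) M

/-- The topology on `RepSpace S M`: the product over the generators of the strong
operator topology (the topology of pointwise norm-convergence). -/
instance repSpaceTopology (S M : Type) [NormedAddCommGroup M] [InnerProductSpace ℂ M]
    [CompleteSpace M] : TopologicalSpace (RepSpace S M) :=
  TopologicalSpace.induced
    (fun (π : RepSpace S M) => fun (s : S) (v : M) => (π (FreeGroup.of s) : M →L[ℂ] M) v)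
    inferInstance

/-- The set of representations `π` of the free group on `M` such that the tensor
product `η ⊗ π` is irreducible (on any realization of the Hilbert tensor product). -/
def IrrTensorReps {S H M : Type}
    [NormedAddCommGroup H] [InnerProductSpace ℂ H] [CompleteSpace H]
    [NormedAddCommGroup M] [InnerProductSpace ℂ M] [CompleteSpace M]
    (η : URep (FreeGroup S) H) : Set (RepSpace S M) :=
  {π | ∀ (E : Type) [NormedAddCommGroup E] [InnerProductSpace ℂ E] [CompleteSpace E],
        ∀ (tmul : H →ₗ[ℂ] M →ₗ[ℂ] E) (ρ : URep (FreeGroup S) E),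
          IsTensorRep η π tmul ρ → IsIrreducibleRep ρ}

/-- The unitary group of `M`, as a type, to be regarded with the strong operator
topology. -/
def UnitarySOT (M : Type) [NormedAddCommGroup M] [InnerProductSpace ℂ M]
    [CompleteSpace M] : Type :=
  unitary (M →L[ℂ] M)

/-- The underlying bounded operator of an element of `UnitarySOT M`. -/
def UnitarySOT.toCLM {M : Type} [NormedAddCommGroup M] [InnerProductSpace ℂ M]
    [CompleteSpace M] (U : UnitarySOT M) : M →L[ℂ] M :=
  (show unitary (M →L[ℂ] M) from U).1

/-- The strong operator topology on the unitary group: the topology of pointwise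
norm-convergence. -/
instance unitarySOTTopology (M : Type) [NormedAddCommGroup M] [InnerProductSpace ℂ M]
    [CompleteSpace M] : TopologicalSpace (UnitarySOT M) :=
  TopologicalSpace.induced (fun (U : UnitarySOT M) (v : M) => U.toCLM v) inferInstance

/-!
A basic strong-operator neighbourhood of a unitary `U` only constrains `U` on a finite set of
vectors, spanning a finite-dimensional subspace `S`. Inside the finite-dimensional space
`K = S + U S` the isometry `U|_S` extends to a unitary `W` of `K`. The operator acting as `W` on
`K` and as the identity on `Kᗮ` is unitary, agrees with `U` on `S`, and differs from the identity
by an operator with range in `K`.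
-/

theorem Topology.IsInducing.dense_of_forall_finset_exists_eqOn {X ι : Type*} {Y : ι → Type*}
    [TopologicalSpace X] [∀ i, TopologicalSpace (Y i)] {f : X → ∀ i, Y i} (hf : IsInducing f)
    {D : Set X} (h : ∀ x (t : Finset ι), ∃ y ∈ D, ∀ i ∈ t, f y i = f x i) : Dense D := by
  rw [hf.dense_iff]
  intro x
  rw [mem_closure_iff_nhds]
  intro s hs
  rw [nhds_pi, Filter.mem_pi'] at hs
  obtain ⟨t, u, hu, hts⟩ := hs
  obtain ⟨y, hyD, hy⟩ := h x t
  refine ⟨f y, hts fun i hi => ?_, y, hyD, rfl⟩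
  rw [hy i hi]
  exact mem_of_mem_nhds (hu i)

namespace LinearIsometryEquiv

variable {𝕜 E : Type*} [RCLike 𝕜] [NormedAddCommGroup E] [InnerProductSpace 𝕜 E]

def extendById (K : Submodule 𝕜 E) [K.HasOrthogonalProjection] (W : K ≃ₗᵢ[𝕜] K) :
    E ≃ₗᵢ[𝕜] E :=
  K.orthogonalDecomposition.trans
    ((W.withLpProdCongr 2 (LinearIsometryEquiv.refl 𝕜 Kᗮ)).trans K.orthogonalDecomposition.symm)

variable (K : Submodule 𝕜 E) [K.HasOrthogonalProjection] (W : K ≃ₗᵢ[𝕜] K)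

theorem extendById_apply (x : E) :
    extendById K W x =
      (W (K.orthogonalProjectionOnto x) : E) + Kᗮ.orthogonalProjectionOnto x := by
  simp [extendById]

theorem extendById_apply_of_mem {x : E} (hx : x ∈ K) : extendById K W x = W ⟨x, hx⟩ := by
  simp [extendById_apply, K.orthogonalProjectionOnto_mem_subspace_eq_self ⟨x, hx⟩,
    Submodule.orthogonalProjectionOnto_orthogonal_apply_eq_zero hx]

theorem extendById_eq_one_add :
    (extendById K W : E →L[𝕜] E) =
      1 + K.subtypeL ∘L ((W : K →L[𝕜] K) - 1) ∘L K.orthogonalProjectionOnto := by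
  ext x
  change extendById K W x = _
  have hx := K.starProjection_add_starProjection_orthogonal x
  simp only [Submodule.starProjection_apply] at hx
  simp only [extendById_apply, add_apply, one_apply_eq_self,
    ContinuousLinearMap.comp_apply, sub_apply, Submodule.subtypeL_apply,
    Submodule.coe_sub, ContinuousLinearEquiv.coe_coe, coe_toContinuousLinearEquiv]
  generalize K.orthogonalProjectionOnto x = p at hx ⊢
  generalize Kᗮ.orthogonalProjectionOnto x = q at hx ⊢
  rw [← hx]
  abel

theorem exists_extendById_eqOn (U : E ≃ₗᵢ[𝕜] E) (S : Submodule 𝕜 E) [FiniteDimensional 𝕜 S] :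
    ∃ (K : Submodule 𝕜 E) (_ : FiniteDimensional 𝕜 K) (W : K ≃ₗᵢ[𝕜] K),
      ∀ x ∈ S, extendById K W x = U x := by
  let K := S ⊔ S.map (U : E →ₗ[𝕜] E)
  let L : S.comap K.subtype →ₗᵢ[𝕜] K :=
    { toFun s := ⟨U s, Submodule.mem_sup_right (Submodule.mem_map_of_mem s.2)⟩
      map_add' s t := by ext; simp
      map_smul' c s := by ext; simp
      norm_map' s := U.norm_map s }
  refine ⟨K, inferInstance, L.extend.toLinearIsometryEquiv rfl, fun x hx => ?_⟩
  have hxK : x ∈ K := Submodule.mem_sup_left hx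
  rw [extendById_apply_of_mem K _ hxK]
  exact congrArg Subtype.val (L.extend_apply ⟨⟨x, hxK⟩, hx⟩)

theorem exists_finiteDimensional_range_sub_one_eqOn (U : E ≃ₗᵢ[𝕜] E) (S : Submodule 𝕜 E)
    [FiniteDimensional 𝕜 S] :
    ∃ V : E ≃ₗᵢ[𝕜] E,
      FiniteDimensional 𝕜 (LinearMap.range (((V : E →L[𝕜] E) - 1 : E →L[𝕜] E) : E →ₗ[𝕜] E)) ∧
        ∀ x ∈ S, V x = U x := by
  obtain ⟨K, _, W, hW⟩ := exists_extendById_eqOn U S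
  refine ⟨extendById K W, ?_, hW⟩
  rw [extendById_eq_one_add, add_sub_cancel_left]
  refine Submodule.finiteDimensional_of_le (S₂ := K) ?_
  exact (LinearMap.range_comp_le_range _ _).trans K.range_subtype.le

end LinearIsometryEquiv

theorem finite_rank_perturbations_dense_general
    (M : Type) [NormedAddCommGroup M] [InnerProductSpace ℂ M] [CompleteSpace M] :
    Dense {U : UnitarySOT M | ∃ A : M →L[ℂ] M,
      FiniteDimensional ℂ (LinearMap.range (A : M →ₗ[ℂ] M)) ∧
        U.toCLM = 1 + A} := by
  refine Topology.IsInducing.dense_of_forall_finset_exists_eqOn ⟨rfl⟩ fun U t => ?_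
  obtain ⟨V, hV, hVU⟩ := LinearIsometryEquiv.exists_finiteDimensional_range_sub_one_eqOn
    (Unitary.linearIsometryEquiv U) (Submodule.span ℂ t)
  exact ⟨Unitary.linearIsometryEquiv.symm V, ⟨_, hV, (add_sub_cancel _ _).symm⟩,
    fun v hv => hVU v (Submodule.subset_span hv)⟩

/-- **Lemma.**  Unitary operators of the form `I + A` with `A` of finite rank are dense
in the unitary group of `M` with the strong operator topology. -/
theorem finite_rank_perturbations_dense
    (M : Type) [NormedAddCommGroup M] [InnerProductSpace ℂ M] [CompleteSpace M]
    [TopologicalSpace.SeparableSpace M] (hM : ¬ FiniteDimensional ℂ M) :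
    Dense {U : UnitarySOT M | ∃ A : M →L[ℂ] M,
      FiniteDimensional ℂ (LinearMap.range (A : M →ₗ[ℂ] M)) ∧
        U.toCLM = 1 + A} :=
  finite_rank_perturbations_dense_general M
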